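/- Under Assumptions (B1)–(B4), fix a noise path Z with Hölder constant Λ, let Y be the corresponding pathwise solution and, for each N with c3·Δ_N < 1, let Ŷ_N be the corresponding drift-implicit Euler scheme. Then for every r ≥ 1 there exists a constant 𝒞 > 0, independent of N, such that for every N with c3·Δ_N < 1: max_{n=0,…,N} |1/(Y(t_n) − φ(t_n)) − 1/(Ŷ_N(t_n) − φ(t_n))|^r ≤ 𝒞·Δ_N^{λr} and max_{n=0,…,N} |1/(ψ(t_n) − Y(t_n)) − 1/(ψ(t_n) − Ŷ_N(t_n))|^r ≤ 𝒞·Δ_N^{λr}. -/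

import Mathlib

open MeasureTheory

open Set Filter Topology Real

/-!
By compactness the exact solution stays a distance `δ > 0` away from `φ` and `ψ`. In that tube
the drift is Lipschitz in `y`, and the solution is `λ`-Hölder, so `s ↦ b(s, Y(s))` is `λ`-Hölder
and the rectangle rule on `[t_k, t_{k+1}]` has local error `O(Δ^{1+λ})`. Since `∂b/∂y < c₃`, the map
`y ↦ y - Δ b(t, y)` expands distances by at least `1 - c₃Δ`, so one implicit Euler step multiplies
the error by at most `1 + 2c₃Δ` (for `c₃Δ ≤ 1/2`); discrete Grönwall then gives a global error
`O(Δ^λ)`. Once it is below `δ/2`, the scheme also stays `δ/2` away from the boundaries, where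
`1/(y - φ)` and `1/(ψ - y)` are Lipschitz in `y`. The finitely many coarse grids only enlarge the
constant.
-/

theorem continuousOn_of_abs_sub_le_mul_rpow {f : ℝ → ℝ} {s : Set ℝ} {K lam : ℝ}
    (hlam : 0 < lam) (hf : ∀ x ∈ s, ∀ y ∈ s, |f y - f x| ≤ K * |y - x| ^ lam) :
    ContinuousOn f s := by
  intro x hx
  have hlim : Tendsto (fun y => K * |y - x| ^ lam) (𝓝[s] x) (𝓝 0) := by
    have hcont : Continuous fun y => K * |y - x| ^ lam :=
      ((continuous_id.sub continuous_const).abs.rpow_const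
        fun _ => Or.inr hlam.le).const_mul K
    simpa [zero_rpow hlam.ne'] using (hcont.tendsto x).mono_left nhdsWithin_le_nhds
  rw [ContinuousWithinAt, ← tendsto_sub_nhds_zero_iff]
  exact squeeze_zero_norm' (eventually_nhdsWithin_of_forall fun y hy => hf x hx y hy) hlim

theorem exists_pos_le_sub_of_continuousOn {α : Type*} [TopologicalSpace α] {s : Set α}
    (hs : IsCompact s) {f g h : α → ℝ} (hf : ContinuousOn f s) (hg : ContinuousOn g s)
    (hh : ContinuousOn h s) (hfgh : ∀ t ∈ s, f t < g t ∧ g t < h t) :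
    ∃ δ > 0, ∀ t ∈ s, δ ≤ g t - f t ∧ δ ≤ h t - g t := by
  obtain ⟨δ, hδ, hle⟩ := hs.exists_forall_le' ((hg.sub hf).inf (hh.sub hg)) (a := 0)
    fun t ht => lt_min (sub_pos.2 (hfgh t ht).1) (sub_pos.2 (hfgh t ht).2)
  exact ⟨δ, hδ, fun t ht => le_inf_iff.1 (hle t ht)⟩

theorem zero_lt_ciSup_abs_sub {s : Set ℝ} (hs : IsCompact s) {f g : ℝ → ℝ}
    (hf : ContinuousOn f s) (hg : ContinuousOn g s) {t₀ : ℝ} (ht₀ : t₀ ∈ s) (hfg : f t₀ ≠ g t₀) :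
    0 < ⨆ t : s, |g t - f t| := by
  have hbdd : BddAbove (range fun t : s => |g t - f t|) := by
    simpa [image_eq_range] using hs.bddAbove_image (hg.sub hf).abs
  exact (abs_pos.2 (sub_ne_zero.2 hfg.symm)).trans_le (le_ciSup hbdd ⟨t₀, ht₀⟩)

theorem natCast_mul_div_mem_Icc {T : ℝ} (hT : 0 ≤ T) {n N : ℕ} (hn : n ≤ N) :
    (n : ℝ) * T / N ∈ Icc 0 T := by
  refine ⟨by positivity, div_le_of_le_mul₀ (by positivity) hT ?_⟩
  rw [mul_comm]
  exact mul_le_mul_of_nonneg_left (by exact_mod_cast hn) hT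

theorem sub_eq_integral_add_sub {T y₀ : ℝ} {g Y Z : ℝ → ℝ} (hg : ContinuousOn g (Icc 0 T))
    (hY : ∀ t ∈ Icc 0 T, Y t = y₀ + (∫ s in (0 : ℝ)..t, g s) + Z t) :
    ∀ s ∈ Icc 0 T, ∀ t ∈ Icc 0 T, Y t - Y s = (∫ u in s..t, g u) + (Z t - Z s) := by
  intro s hs t ht
  have h0 : (0 : ℝ) ∈ Icc 0 T := ⟨le_rfl, hs.1.trans hs.2⟩
  have hint : ∀ x ∈ Icc 0 T, IntervalIntegrable g volume 0 x := fun x hx =>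
    (hg.mono (uIcc_subset_Icc h0 hx)).intervalIntegrable
  rw [hY t ht, hY s hs, ← intervalIntegral.integral_interval_sub_left (hint t ht) (hint s hs)]
  ring

theorem abs_le_rpow_mul_abs_rpow {x T lam : ℝ} (hlam : lam ≤ 1) (hx : |x| ≤ T) :
    |x| ≤ T ^ (1 - lam) * |x| ^ lam := by
  calc |x| = |x| ^ (1 - lam) * |x| ^ lam := by
        rw [← rpow_add' (abs_nonneg x) (by norm_num), sub_add_cancel, rpow_one]
    _ ≤ T ^ (1 - lam) * |x| ^ lam := by gcongr

theorem exists_abs_sub_le_mul_rpow_of_sub_eq_integral {T lam Λ : ℝ} {g Y Z : ℝ → ℝ}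
    (hT : 0 ≤ T) (hlam : lam ≤ 1) (hΛ : 0 ≤ Λ) (hg : ContinuousOn g (Icc 0 T))
    (hZ : ∀ s ∈ Icc 0 T, ∀ t ∈ Icc 0 T, |Z t - Z s| ≤ Λ * |t - s| ^ lam)
    (hY : ∀ s ∈ Icc 0 T, ∀ t ∈ Icc 0 T, Y t - Y s = (∫ u in s..t, g u) + (Z t - Z s)) :
    ∃ C, 0 ≤ C ∧ ∀ s ∈ Icc 0 T, ∀ t ∈ Icc 0 T, |Y t - Y s| ≤ C * |t - s| ^ lam := by
  obtain ⟨M, hM⟩ := isCompact_Icc.exists_bound_of_continuousOn hg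
  refine ⟨max M 0 * T ^ (1 - lam) + Λ, by positivity, fun s hs t ht => ?_⟩
  have hint : |∫ u in s..t, g u| ≤ max M 0 * |t - s| := by
    simpa using intervalIntegral.norm_integral_le_of_norm_le_const fun u hu =>
      (hM u (uIcc_subset_Icc hs ht (uIoc_subset_uIcc hu))).trans (le_max_left M 0)
  have hts : |t - s| ≤ T :=
    abs_sub_le_iff.2 ⟨by linarith [ht.2, hs.1], by linarith [hs.2, ht.1]⟩
  calc |Y t - Y s| ≤ |∫ u in s..t, g u| + |Z t - Z s| := by
        rw [hY s hs t ht]; exact abs_add_le _ _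
    _ ≤ max M 0 * (T ^ (1 - lam) * |t - s| ^ lam) + Λ * |t - s| ^ lam := by
        gcongr
        · exact hint.trans (by gcongr; exact abs_le_rpow_mul_abs_rpow hlam hts)
        · exact hZ s hs t ht
    _ = (max M 0 * T ^ (1 - lam) + Λ) * |t - s| ^ lam := by ring

theorem abs_sub_le_mul_rpow_of_lipschitzOn_tube {I : Set ℝ} {lam ε L C : ℝ}
    {phi psi Y : ℝ → ℝ} {b : ℝ → ℝ → ℝ} (hL : 0 ≤ L)
    (hb : ∀ t1 ∈ I, ∀ t2 ∈ I, ∀ y1 y2 : ℝ,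
      phi t1 + ε < y1 → y1 < psi t1 - ε → phi t2 + ε < y2 → y2 < psi t2 - ε →
        |b t1 y1 - b t2 y2| ≤ L * (|y1 - y2| + |t1 - t2| ^ lam))
    (hY : ∀ t ∈ I, phi t + ε < Y t ∧ Y t < psi t - ε)
    (hYH : ∀ s ∈ I, ∀ t ∈ I, |Y t - Y s| ≤ C * |t - s| ^ lam) :
    ∀ s ∈ I, ∀ t ∈ I, |b s (Y s) - b t (Y t)| ≤ L * (C + 1) * |s - t| ^ lam := by
  intro s hs t ht
  calc |b s (Y s) - b t (Y t)| ≤ L * (|Y s - Y t| + |s - t| ^ lam) :=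
        hb s hs t ht _ _ (hY s hs).1 (hY s hs).2 (hY t ht).1 (hY t ht).2
    _ ≤ L * (C * |s - t| ^ lam + |s - t| ^ lam) := by
        gcongr
        exact hYH t ht s hs
    _ = L * (C + 1) * |s - t| ^ lam := by ring

theorem mul_abs_sub_le_abs_sub_of_deriv_lt {f f' : ℝ → ℝ} {lo hi c Δ x y : ℝ}
    (hf : ∀ u ∈ Ioo lo hi, HasDerivAt f (f' u) u) (hf' : ∀ u ∈ Ioo lo hi, f' u < c)
    (hΔ : 0 ≤ Δ) (hx : x ∈ Ioo lo hi) (hy : y ∈ Ioo lo hi) :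
    (1 - c * Δ) * |x - y| ≤ |(x - Δ * f x) - (y - Δ * f y)| := by
  wlog hxy : y ≤ x generalizing x y
  · rw [abs_sub_comm x, abs_sub_comm (x - _)]
    exact this hy hx (le_of_not_ge hxy)
  have hF : ∀ u ∈ Ioo lo hi, HasDerivAt (fun v => v - Δ * f v) (1 - Δ * f' u) u := fun u hu =>
    (hasDerivAt_id u).sub ((hf u hu).const_mul Δ)
  have hmono := (convex_Ioo lo hi).mul_sub_le_image_sub_of_le_deriv (C := 1 - c * Δ)
    (fun u hu => (hF u hu).continuousAt.continuousWithinAt)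
    (fun u hu => (hF u (interior_subset hu)).differentiableAt.differentiableWithinAt)
    (fun u hu => by
      rw [(hF u (interior_subset hu)).deriv]
      nlinarith [hf' u (interior_subset hu)])
    y hy x hx hxy
  rw [abs_of_nonneg (sub_nonneg.2 hxy)]
  exact hmono.trans (le_abs_self _)

theorem abs_integral_sub_mul_le {g : ℝ → ℝ} {s t L : ℝ} (hst : s ≤ t)
    (hg : IntervalIntegrable g volume s t) (hL : ∀ u ∈ Ioc s t, |g u - g t| ≤ L) :
    |(∫ u in s..t, g u) - (t - s) * g t| ≤ L * (t - s) := by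
  have hsub : ∫ u in s..t, (g u - g t) = (∫ u in s..t, g u) - (t - s) * g t := by
    rw [intervalIntegral.integral_sub hg intervalIntegrable_const, intervalIntegral.integral_const,
      smul_eq_mul]
  rw [← hsub, ← abs_of_nonneg (sub_nonneg.2 hst)]
  refine intervalIntegral.norm_integral_le_of_norm_le_const fun u hu =>
    (norm_eq_abs _).trans_le (hL u ?_)
  rwa [uIoc_of_le hst] at hu

theorem abs_integral_sub_mul_le_of_holder {g : ℝ → ℝ} {s t L lam : ℝ} (hst : s ≤ t)
    (hlam : 0 < lam) (hL : 0 ≤ L)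
    (hg : ∀ u ∈ Icc s t, ∀ v ∈ Icc s t, |g u - g v| ≤ L * |u - v| ^ lam) :
    |(∫ u in s..t, g u) - (t - s) * g t| ≤ L * (t - s) ^ lam * (t - s) := by
  have hgc : ContinuousOn g (Icc s t) :=
    continuousOn_of_abs_sub_le_mul_rpow hlam fun u hu v hv => hg v hv u hu
  refine abs_integral_sub_mul_le hst (hgc.intervalIntegrable_of_Icc hst) fun u hu => ?_
  calc |g u - g t| ≤ L * |u - t| ^ lam := hg u (Ioc_subset_Icc_self hu) t (right_mem_Icc.2 hst)
    _ ≤ L * (t - s) ^ lam := by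
        gcongr
        exact abs_sub_le_iff.2 ⟨by linarith [hu.2], by linarith [hu.1]⟩

theorem mul_abs_sub_le_of_implicitEuler_step {f f' : ℝ → ℝ} {lo hi c Δ y y' x x' I z : ℝ}
    (hf : ∀ u ∈ Ioo lo hi, HasDerivAt f (f' u) u) (hf' : ∀ u ∈ Ioo lo hi, f' u < c)
    (hΔ : 0 ≤ Δ) (hy' : y' ∈ Ioo lo hi) (hx' : x' ∈ Ioo lo hi)
    (hy : y' - y = I + z) (hx : x' = x + f x' * Δ + z) :
    (1 - c * Δ) * |y' - x'| ≤ |y - x| + |I - Δ * f y'| :=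
  calc (1 - c * Δ) * |y' - x'| ≤ |(y' - Δ * f y') - (x' - Δ * f x')| :=
        mul_abs_sub_le_abs_sub_of_deriv_lt hf hf' hΔ hy' hx'
    _ = |(y - x) + (I - Δ * f y')| := by congr 1; linear_combination hy - hx
    _ ≤ |y - x| + |I - Δ * f y'| := abs_add_le _ _

theorem le_mul_exp_of_le_one_add_mul_add {a : ℕ → ℝ} {q d : ℝ} {N n : ℕ}
    (ha : ∀ k, 0 ≤ a k) (hq : 0 ≤ q) (hd : 0 ≤ d) (h0 : a 0 = 0)
    (hstep : ∀ k < N, a (k + 1) ≤ (1 + q) * a k + d) (hn : n ≤ N) : a n ≤ n * d * exp (n * q) := by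
  -- freezing `a` after step `N` makes the recursion hold for every `k`
  have h := discrete_gronwall (u := fun k => a (min k N)) (c := fun _ => q) (b := fun _ => d)
    (n₀ := 0) (ha _) (fun k _ => ?_) (fun _ _ => hq) (fun _ _ => hd) (Nat.zero_le n)
  · simpa [min_eq_left hn, h0, mul_comm] using h
  · rcases lt_or_ge k N with hk | hk
    · simpa [min_eq_left hk.le, min_eq_left (Nat.succ_le_of_lt hk)] using hstep k hk
    · simp only [min_eq_right hk, min_eq_right (hk.trans (Nat.le_succ k))]
      nlinarith [ha N]

theorem abs_sub_implicitEuler_le {T lam c3 L : ℝ} {phi psi Y Z : ℝ → ℝ} {b bp : ℝ → ℝ → ℝ}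
    {Yh : ℕ → ℝ} {N : ℕ} (hT : 0 < T) (hlam : 0 < lam) (hc3 : 0 ≤ c3) (hL : 0 ≤ L)
    (hderiv : ∀ t ∈ Icc (0:ℝ) T, ∀ y : ℝ, phi t < y → y < psi t →
      HasDerivAt (fun x => b t x) (bp t y) y)
    (hbp : ∀ t ∈ Icc (0:ℝ) T, ∀ y : ℝ, phi t < y → y < psi t → bp t y < c3)
    (hY : ∀ t ∈ Icc (0:ℝ) T, phi t < Y t ∧ Y t < psi t)
    (hgH : ∀ s ∈ Icc (0:ℝ) T, ∀ t ∈ Icc (0:ℝ) T,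
      |b s (Y s) - b t (Y t)| ≤ L * |s - t| ^ lam)
    (hYinc : ∀ s ∈ Icc (0:ℝ) T, ∀ t ∈ Icc (0:ℝ) T,
      Y t - Y s = (∫ u in s..t, b u (Y u)) + (Z t - Z s))
    (hN : 0 < N) (hc3N : c3 * (T / N) ≤ 1 / 2) (hYh0 : Yh 0 = Y 0)
    (hYh : ∀ k : ℕ, k < N →
      phi (((k : ℝ) + 1) * T / (N : ℝ)) < Yh (k + 1) ∧
      Yh (k + 1) < psi (((k : ℝ) + 1) * T / (N : ℝ)) ∧
      Yh (k + 1) = Yh k + b (((k : ℝ) + 1) * T / (N : ℝ)) (Yh (k + 1)) * (T / (N : ℝ))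
        + (Z (((k : ℝ) + 1) * T / (N : ℝ)) - Z ((k : ℝ) * T / (N : ℝ))))
    {n : ℕ} (hn : n ≤ N) :
    |Y (n * T / N) - Yh n| ≤ 2 * L * T * exp (2 * c3 * T) * (T / N) ^ lam := by
  set Δ := T / N with hΔ
  have hΔpos : 0 < Δ := by positivity
  have hstep : ∀ k < N, |Y ((k + 1 : ℕ) * T / N) - Yh (k + 1)|
      ≤ (1 + 2 * (c3 * Δ)) * |Y (k * T / N) - Yh k| + 2 * (L * Δ ^ lam * Δ) := by
    intro k hk
    push_cast
    set s := (k : ℝ) * T / N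
    set t := ((k : ℝ) + 1) * T / N
    have hs : s ∈ Icc 0 T := natCast_mul_div_mem_Icc hT.le hk.le
    have ht : t ∈ Icc 0 T := by simpa using natCast_mul_div_mem_Icc hT.le (Nat.succ_le_of_lt hk)
    have hts : t - s = Δ := by ring
    obtain ⟨hlo, hhi, hrec⟩ := hYh k hk
    have hcons : |(∫ u in s..t, b u (Y u)) - Δ * b t (Y t)| ≤ L * Δ ^ lam * Δ := by
      simpa only [hts] using abs_integral_sub_mul_le_of_holder (by linarith) hlam hL
        fun u hu v hv => hgH u (Icc_subset_Icc hs.1 ht.2 hu) v (Icc_subset_Icc hs.1 ht.2 hv)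
    have hprop := mul_abs_sub_le_of_implicitEuler_step (fun y hy => hderiv t ht y hy.1 hy.2)
      (fun y hy => hbp t ht y hy.1 hy.2) hΔpos.le (hY t ht) ⟨hlo, hhi⟩ (hYinc s hs t ht) hrec
    have hone : (1 - c3 * Δ) * |Y t - Yh (k + 1)| ≤ |Y s - Yh k| + L * Δ ^ lam * Δ :=
      hprop.trans (by gcongr)
    -- `1 / (1 - h) ≤ 1 + 2 h` for `0 ≤ h ≤ 1 / 2`
    have hc3Δ : 0 ≤ c3 * Δ := by positivity
    have hR : 0 ≤ L * Δ ^ lam * Δ := by positivity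
    nlinarith [mul_le_mul_of_nonneg_left hone (by linarith : 0 ≤ 1 + 2 * (c3 * Δ)),
      mul_nonneg (mul_nonneg hc3Δ (abs_nonneg (Y t - Yh (k + 1))))
        (by linarith : 0 ≤ 1 - 2 * (c3 * Δ)),
      mul_nonneg hR (by linarith : 0 ≤ 1 - 2 * (c3 * Δ))]
  have hnΔ : (n : ℝ) * Δ ≤ T := by
    have : (n : ℝ) ≤ N := by exact_mod_cast hn
    rw [hΔ, mul_div_assoc', div_le_iff₀ (by positivity)]
    nlinarith
  calc |Y (n * T / N) - Yh n| ≤ n * (2 * (L * Δ ^ lam * Δ)) * exp (n * (2 * (c3 * Δ))) :=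
        le_mul_exp_of_le_one_add_mul_add (a := fun k => |Y (k * T / N) - Yh k|)
          (fun _ => abs_nonneg _) (by positivity) (by positivity) (by simp [hYh0]) hstep hn
    _ = 2 * L * (n * Δ) * exp (2 * c3 * (n * Δ)) * Δ ^ lam := by ring_nf
    _ ≤ 2 * L * T * exp (2 * c3 * T) * Δ ^ lam := by gcongr

theorem abs_one_div_sub_one_div_le {a b m : ℝ} (hm : 0 < m) (ha : m ≤ a) (hb : m ≤ b) :
    |1 / a - 1 / b| ≤ |a - b| / m ^ 2 := by
  have ha0 : 0 < a := hm.trans_le ha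
  have hb0 : 0 < b := hm.trans_le hb
  rw [div_sub_div _ _ ha0.ne' hb0.ne', abs_div, abs_of_pos (mul_pos ha0 hb0), one_mul, mul_one,
    abs_sub_comm]
  exact div_le_div₀ (abs_nonneg _) le_rfl (by positivity) (by nlinarith)

theorem max_abs_one_div_sub_le {lo hi y z δ : ℝ} (hδ : 0 < δ) (hlo : δ ≤ y - lo)
    (hhi : δ ≤ hi - y) (hyz : |y - z| ≤ δ / 2) :
    max |1 / (y - lo) - 1 / (z - lo)| |1 / (hi - y) - 1 / (hi - z)| ≤ |y - z| / (δ / 2) ^ 2 := by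
  obtain ⟨hzy, hyz'⟩ := abs_le.1 hyz
  refine max_le ?_ ?_
  · simpa only [sub_sub_sub_cancel_right] using
      abs_one_div_sub_one_div_le (half_pos hδ) (by linarith : δ / 2 ≤ y - lo)
        (by linarith : δ / 2 ≤ z - lo)
  · simpa only [sub_sub_sub_cancel_left, abs_sub_comm z y] using
      abs_one_div_sub_one_div_le (half_pos hδ) (by linarith : δ / 2 ≤ hi - y)
        (by linarith : δ / 2 ≤ hi - z)

theorem tendsto_mul_div_natCast_rpow_atTop (c T : ℝ) {lam : ℝ} (hlam : 0 < lam) :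
    Tendsto (fun N : ℕ => c * (T / N) ^ lam) atTop (𝓝 0) := by
  simpa [zero_rpow hlam.ne'] using
    ((continuousAt_rpow_const 0 lam (Or.inr hlam.le)).tendsto.comp
      (tendsto_const_div_atTop_nhds_zero_nat T)).const_mul c

theorem eventually_max_abs_one_div_sub_le {T lam c3 CE δ : ℝ} {phi psi Y : ℝ → ℝ}
    {Yh : ℕ → ℕ → ℝ} (hT : 0 ≤ T) (hlam : 0 < lam) (hδ : 0 < δ)
    (hY : ∀ t ∈ Icc 0 T, δ ≤ Y t - phi t ∧ δ ≤ psi t - Y t)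
    (herr : ∀ N : ℕ, 0 < N → c3 * (T / N) ≤ 1 / 2 → ∀ n ≤ N,
      |Y (n * T / N) - Yh N n| ≤ CE * (T / N) ^ lam) :
    ∀ᶠ N : ℕ in atTop, ∀ n ≤ N,
      max |1 / (Y (n * T / N) - phi (n * T / N)) - 1 / (Yh N n - phi (n * T / N))|
        |1 / (psi (n * T / N) - Y (n * T / N)) - 1 / (psi (n * T / N) - Yh N n)|
        ≤ CE / (δ / 2) ^ 2 * (T / N) ^ lam := by
  filter_upwards [(tendsto_mul_div_natCast_rpow_atTop c3 T one_pos).eventually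
      (ge_mem_nhds (by norm_num : (0:ℝ) < 1 / 2)),
    (tendsto_mul_div_natCast_rpow_atTop CE T hlam).eventually (ge_mem_nhds (half_pos hδ)),
    eventually_gt_atTop 0] with N hc3N hCEN hN n hn
  rw [rpow_one] at hc3N
  have herrN := herr N hN hc3N n hn
  have hYn := hY _ (natCast_mul_div_mem_Icc hT hn)
  calc _ ≤ |Y (n * T / N) - Yh N n| / (δ / 2) ^ 2 :=
        max_abs_one_div_sub_le hδ hYn.1 hYn.2 (herrN.trans hCEN)
    _ ≤ CE * (T / N) ^ lam / (δ / 2) ^ 2 := by gcongr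
    _ = CE / (δ / 2) ^ 2 * (T / N) ^ lam := by ring

theorem exists_le_mul_of_eventually_le (x : ℕ → ℕ → ℝ) {w : ℕ → ℝ} {A : ℝ}
    (hw : ∀ N, 0 < N → 0 < w N) (h : ∀ᶠ N in atTop, ∀ n ≤ N, x N n ≤ A * w N) :
    ∃ C, 0 < C ∧ ∀ N, 0 < N → ∀ n ≤ N, x N n ≤ C * w N := by
  obtain ⟨N₀, hN₀⟩ := eventually_atTop.1 h
  obtain ⟨B, hB⟩ := (((finite_Iio N₀).prod (finite_Iio N₀)).image
    fun p : ℕ × ℕ => x p.1 p.2 / w p.1).bddAbove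
  refine ⟨max 1 (max A B), by positivity, fun N hN n hn => ?_⟩
  rcases lt_or_ge N N₀ with hN₀' | hN₀'
  · have hxB : x N n / w N ≤ B := hB ⟨(N, n), ⟨hN₀', hn.trans_lt hN₀'⟩, rfl⟩
    rw [div_le_iff₀ (hw N hN)] at hxB
    exact hxB.trans
      (by gcongr; exacts [(hw N hN).le, (le_max_right _ _).trans (le_max_right _ _)])
  · exact (hN₀ N hN₀' n hn).trans
      (by gcongr; exacts [(hw N hN).le, (le_max_left _ _).trans (le_max_right _ _)])

theorem rpow_le_rpow_mul_rpow_mul {x C Δ lam r : ℝ} (hx : 0 ≤ x) (hC : 0 ≤ C) (hΔ : 0 ≤ Δ)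
    (hr : 0 ≤ r) (h : x ≤ C * Δ ^ lam) : x ^ r ≤ C ^ r * Δ ^ (lam * r) := by
  calc x ^ r ≤ (C * Δ ^ lam) ^ r := rpow_le_rpow hx h hr
    _ = C ^ r * Δ ^ (lam * r) := by rw [mul_rpow hC (rpow_nonneg hΔ _), ← rpow_mul hΔ]

theorem stmt_12_general
    (T lam : ℝ) (hT : 0 < T) (hlam : lam ∈ Set.Ioo (0:ℝ) 1)
    (phi psi : ℝ → ℝ) (K : ℝ)
    (hphiH : ∀ s ∈ Set.Icc (0:ℝ) T, ∀ t ∈ Set.Icc (0:ℝ) T, |phi t - phi s| ≤ K * |t - s| ^ lam)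
    (hpsiH : ∀ s ∈ Set.Icc (0:ℝ) T, ∀ t ∈ Set.Icc (0:ℝ) T, |psi t - psi s| ≤ K * |t - s| ^ lam)
    (hphipsi : ∀ t ∈ Set.Icc (0:ℝ) T, phi t < psi t)
    (b : ℝ → ℝ → ℝ) (c1 p : ℝ)
    (hc1 : 0 < c1)
    (hB2cont : ContinuousOn (fun q : ℝ × ℝ => b q.1 q.2)
      {q : ℝ × ℝ | q.1 ∈ Set.Icc (0:ℝ) T ∧ phi q.1 < q.2 ∧ q.2 < psi q.1})
    (hB2lip : ∀ ε : ℝ, 0 < ε → ε < min 1 ((⨆ t : Set.Icc (0:ℝ) T, |psi t.1 - phi t.1|) / 2) →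
      ∀ t1 ∈ Set.Icc (0:ℝ) T, ∀ t2 ∈ Set.Icc (0:ℝ) T, ∀ y1 y2 : ℝ,
        phi t1 + ε < y1 → y1 < psi t1 - ε → phi t2 + ε < y2 → y2 < psi t2 - ε →
        |b t1 y1 - b t2 y2| ≤ c1 / ε ^ p * (|y1 - y2| + |t1 - t2| ^ lam))
    (Y0 : ℝ)
    (bp : ℝ → ℝ → ℝ) (c3 : ℝ) (hc3 : 0 < c3)
    (hB4deriv : ∀ t ∈ Set.Icc (0:ℝ) T, ∀ y : ℝ, phi t < y → y < psi t →
      HasDerivAt (fun x => b t x) (bp t y) y)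
    (hB4lt : ∀ t ∈ Set.Icc (0:ℝ) T, ∀ y : ℝ, phi t < y → y < psi t → bp t y < c3)
    (Z : ℝ → ℝ) (Lam : ℝ) (hLam : 0 < Lam) (hZ0 : Z 0 = 0)
    (hZH : ∀ s ∈ Set.Icc (0:ℝ) T, ∀ t ∈ Set.Icc (0:ℝ) T, |Z t - Z s| ≤ Lam * |t - s| ^ lam)
    (Y : ℝ → ℝ) (hYc : ContinuousOn Y (Set.Icc (0:ℝ) T))
    (hYsand : ∀ t ∈ Set.Icc (0:ℝ) T, phi t < Y t ∧ Y t < psi t)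
    (hYeq : ∀ t ∈ Set.Icc (0:ℝ) T, Y t = Y0 + (∫ s in (0:ℝ)..t, b s (Y s)) + Z t)
    (Yh : ℕ → ℕ → ℝ) (hYh0 : ∀ N : ℕ, Yh N 0 = Y0)
    (hYhrec : ∀ N : ℕ, 0 < N → c3 * (T / (N : ℝ)) < 1 → ∀ k : ℕ, k < N →
      phi (((k : ℝ) + 1) * T / (N : ℝ)) < Yh N (k + 1) ∧
      Yh N (k + 1) < psi (((k : ℝ) + 1) * T / (N : ℝ)) ∧
      Yh N (k + 1) = Yh N k + b (((k : ℝ) + 1) * T / (N : ℝ)) (Yh N (k + 1)) * (T / (N : ℝ))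
        + (Z (((k : ℝ) + 1) * T / (N : ℝ)) - Z ((k : ℝ) * T / (N : ℝ))))
    :
    ∀ r : ℝ, 1 ≤ r → ∃ C : ℝ, 0 < C ∧
      ∀ N : ℕ, 0 < N → c3 * (T / (N : ℝ)) < 1 →
        ∀ n : ℕ, n ≤ N →
          |1 / (Y ((n : ℝ) * T / (N : ℝ)) - phi ((n : ℝ) * T / (N : ℝ))) - 1 / (Yh N n - phi ((n : ℝ) * T / (N : ℝ)))| ^ r
            ≤ C * (T / (N : ℝ)) ^ (lam * r) ∧
          |1 / (psi ((n : ℝ) * T / (N : ℝ)) - Y ((n : ℝ) * T / (N : ℝ))) - 1 / (psi ((n : ℝ) * T / (N : ℝ)) - Yh N n)| ^ r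
            ≤ C * (T / (N : ℝ)) ^ (lam * r) := by
  intro r hr
  obtain ⟨hlam0, hlam1⟩ := hlam
  have h0T : (0:ℝ) ∈ Icc 0 T := left_mem_Icc.2 hT.le
  have hphic := continuousOn_of_abs_sub_le_mul_rpow hlam0 hphiH
  have hpsic := continuousOn_of_abs_sub_le_mul_rpow hlam0 hpsiH
  have hgc : ContinuousOn (fun s => b s (Y s)) (Icc 0 T) :=
    hB2cont.comp (continuousOn_id.prodMk hYc) fun s hs => ⟨hs, hYsand s hs⟩
  have hYinc := sub_eq_integral_add_sub hgc hYeq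
  obtain ⟨δ, hδ, hYδ⟩ := exists_pos_le_sub_of_continuousOn isCompact_Icc hphic hYc hpsic hYsand
  obtain ⟨CY, hCY, hYH⟩ :=
    exists_abs_sub_le_mul_rpow_of_sub_eq_integral hT.le hlam1.le hLam.le hgc hZH hYinc
  obtain ⟨ε, hε, hεlt⟩ := exists_between (lt_min hδ (lt_min one_pos (half_pos
    (zero_lt_ciSup_abs_sub isCompact_Icc hphic hpsic h0T (hphipsi 0 h0T).ne))))
  have hgH := abs_sub_le_mul_rpow_of_lipschitzOn_tube (by positivity)
    (hB2lip ε hε (hεlt.trans_le (min_le_right _ _)))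
    (fun t ht => by constructor <;> linarith [hYδ t ht, hεlt.trans_le (min_le_left _ _)]) hYH
  have hY0 : Y 0 = Y0 := by simpa [hZ0] using hYeq 0 h0T
  obtain ⟨C, hC, hbound⟩ := exists_le_mul_of_eventually_le _ (fun N hN => by positivity)
    (eventually_max_abs_one_div_sub_le hT.le hlam0 hδ hYδ fun N hN hc3N n hn =>
      abs_sub_implicitEuler_le hT hlam0 hc3.le (by positivity) hB4deriv hB4lt hYsand hgH hYinc
        hN hc3N ((hYh0 N).trans hY0.symm) (hYhrec N hN (by linarith)) hn)
  refine ⟨C ^ r, rpow_pos_of_pos hC r, fun N hN _ n hn => ?_⟩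
  have hle := hbound N hN n hn
  exact ⟨rpow_le_rpow_mul_rpow_mul (abs_nonneg _) hC.le (by positivity) (by linarith)
      ((le_max_left _ _).trans hle),
    rpow_le_rpow_mul_rpow_mul (abs_nonneg _) hC.le (by positivity) (by linarith)
      ((le_max_right _ _).trans hle)⟩

theorem stmt_12
    (T lam : ℝ) (hT : 0 < T) (hlam : lam ∈ Set.Ioo (0:ℝ) 1)
    (phi psi : ℝ → ℝ) (K : ℝ) (hK : 0 < K)
    (hphiH : ∀ s ∈ Set.Icc (0:ℝ) T, ∀ t ∈ Set.Icc (0:ℝ) T, |phi t - phi s| ≤ K * |t - s| ^ lam)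
    (hpsiH : ∀ s ∈ Set.Icc (0:ℝ) T, ∀ t ∈ Set.Icc (0:ℝ) T, |psi t - psi s| ≤ K * |t - s| ^ lam)
    (hphipsi : ∀ t ∈ Set.Icc (0:ℝ) T, phi t < psi t)
    (b : ℝ → ℝ → ℝ) (c1 p c2 ystar gam : ℝ)
    (hc1 : 0 < c1) (hp : 1 < p) (hc2 : 0 < c2) (hystar : 0 < ystar)
    (hgam : 1 / lam - 1 < gam)
    (hB2cont : ContinuousOn (fun q : ℝ × ℝ => b q.1 q.2)
      {q : ℝ × ℝ | q.1 ∈ Set.Icc (0:ℝ) T ∧ phi q.1 < q.2 ∧ q.2 < psi q.1})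
    (hB2lip : ∀ ε : ℝ, 0 < ε → ε < min 1 ((⨆ t : Set.Icc (0:ℝ) T, |psi t.1 - phi t.1|) / 2) →
      ∀ t1 ∈ Set.Icc (0:ℝ) T, ∀ t2 ∈ Set.Icc (0:ℝ) T, ∀ y1 y2 : ℝ,
        phi t1 + ε < y1 → y1 < psi t1 - ε → phi t2 + ε < y2 → y2 < psi t2 - ε →
        |b t1 y1 - b t2 y2| ≤ c1 / ε ^ p * (|y1 - y2| + |t1 - t2| ^ lam))
    (hB3low : ∀ t ∈ Set.Icc (0:ℝ) T, ∀ y : ℝ, phi t < y → y ≤ phi t + ystar → y < psi t →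
      c2 / (y - phi t) ^ gam ≤ b t y)
    (hB3up : ∀ t ∈ Set.Icc (0:ℝ) T, ∀ y : ℝ, psi t - ystar ≤ y → y < psi t → phi t < y →
      b t y ≤ -(c2 / (psi t - y) ^ gam))
    (Y0 : ℝ) (hB1 : phi 0 < Y0 ∧ Y0 < psi 0)
    (bp : ℝ → ℝ → ℝ) (c3 : ℝ) (hc3 : 0 < c3)
    (hB4deriv : ∀ t ∈ Set.Icc (0:ℝ) T, ∀ y : ℝ, phi t < y → y < psi t →
      HasDerivAt (fun x => b t x) (bp t y) y)
    (hB4cont : ContinuousOn (fun q : ℝ × ℝ => bp q.1 q.2)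
      {q : ℝ × ℝ | q.1 ∈ Set.Icc (0:ℝ) T ∧ phi q.1 < q.2 ∧ q.2 < psi q.1})
    (hB4lt : ∀ t ∈ Set.Icc (0:ℝ) T, ∀ y : ℝ, phi t < y → y < psi t → bp t y < c3)
    (Z : ℝ → ℝ) (Lam : ℝ) (hLam : 0 < Lam) (hZ0 : Z 0 = 0)
    (hZH : ∀ s ∈ Set.Icc (0:ℝ) T, ∀ t ∈ Set.Icc (0:ℝ) T, |Z t - Z s| ≤ Lam * |t - s| ^ lam)
    (Y : ℝ → ℝ) (hYc : ContinuousOn Y (Set.Icc (0:ℝ) T))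
    (hYsand : ∀ t ∈ Set.Icc (0:ℝ) T, phi t < Y t ∧ Y t < psi t)
    (hYeq : ∀ t ∈ Set.Icc (0:ℝ) T, Y t = Y0 + (∫ s in (0:ℝ)..t, b s (Y s)) + Z t)
    (Yh : ℕ → ℕ → ℝ) (hYh0 : ∀ N : ℕ, Yh N 0 = Y0)
    (hYhrec : ∀ N : ℕ, 0 < N → c3 * (T / (N : ℝ)) < 1 → ∀ k : ℕ, k < N →
      phi (((k : ℝ) + 1) * T / (N : ℝ)) < Yh N (k + 1) ∧
      Yh N (k + 1) < psi (((k : ℝ) + 1) * T / (N : ℝ)) ∧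
      Yh N (k + 1) = Yh N k + b (((k : ℝ) + 1) * T / (N : ℝ)) (Yh N (k + 1)) * (T / (N : ℝ))
        + (Z (((k : ℝ) + 1) * T / (N : ℝ)) - Z ((k : ℝ) * T / (N : ℝ))))
    :
    ∀ r : ℝ, 1 ≤ r → ∃ C : ℝ, 0 < C ∧
      ∀ N : ℕ, 0 < N → c3 * (T / (N : ℝ)) < 1 →
        ∀ n : ℕ, n ≤ N →
          |1 / (Y ((n : ℝ) * T / (N : ℝ)) - phi ((n : ℝ) * T / (N : ℝ))) - 1 / (Yh N n - phi ((n : ℝ) * T / (N : ℝ)))| ^ r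
            ≤ C * (T / (N : ℝ)) ^ (lam * r) ∧
          |1 / (psi ((n : ℝ) * T / (N : ℝ)) - Y ((n : ℝ) * T / (N : ℝ))) - 1 / (psi ((n : ℝ) * T / (N : ℝ)) - Yh N n)| ^ r
            ≤ C * (T / (N : ℝ)) ^ (lam * r) :=
  stmt_12_general T lam hT hlam phi psi K hphiH hpsiH hphipsi b c1 p hc1 hB2cont hB2lip Y0 bp c3 hc3
    hB4deriv hB4lt Z Lam hLam hZ0 hZH Y hYc hYsand hYeq Yh hYh0 hYhrec
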